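/- arXiv:1010.3536 — 6 statements merged into one kernel-verified Lean document; each statement's English description precedes it below -/
import Mathlib

section
/- Let Ω be a finite set with |Ω| = n, let G be a permutation group on Ω, let R be an unordered relation on Ω with G ≤ G(R), and let k be an integer with 1 ≤ k and 2k ≤ n + 1 such that no set x ∈ R satisfies k < |x| < n − k. Then every permutation g of Ω with the property that for every k-element subset x of Ω the image g·x lies in the G-orbit of x belongs to G(R). (In other words, the k-closure of G is contained in G(R).) -/
open Pointwise MulAction

/-- The invariance group `G(R)` of an unordered relation `R` on `Ω`:
all permutations `g` such that `x ∈ R` implies `g • x ∈ R`. -/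
def invGroup {Ω : Type*} [Fintype Ω] [DecidableEq Ω] (R : Set (Finset Ω)) :
    Subgroup (Equiv.Perm Ω) where
  carrier := {g | ∀ x ∈ R, g • x ∈ R}
  one_mem' := fun x hx => by simpa using hx
  mul_mem' := fun ha hb x hx => by rw [mul_smul]; exact ha _ (hb _ hx)
  inv_mem' := by
    intro g hg x hx
    have himg : (fun y : Finset _ => g • y) '' R ⊆ R := by
      rintro - ⟨y, hy, rfl⟩; exact hg y hy
    have heq : (fun y : Finset _ => g • y) '' R = R := by
      apply Set.eq_of_subset_of_ncard_le himg _ (Set.toFinite R)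
      rw [Set.ncard_image_of_injective _ (MulAction.injective g)]
    rw [← heq] at hx
    obtain ⟨y, hy, hxy⟩ := hx
    have : g⁻¹ • x = y := by rw [← hxy]; simp
    rwa [this]

/-- A permutation group on `Ω` is a relation group if it is the invariance group
of some unordered relation on `Ω`. -/
def IsRelationGroup {Ω : Type*} [Fintype Ω] [DecidableEq Ω]
    (G : Subgroup (Equiv.Perm Ω)) : Prop :=
  ∃ R : Set (Finset Ω), G = invGroup R

/-- `w` is a regular set for `G`: only the identity of `G` stabilizes `w` setwise. -/
def IsRegularSet {Ω : Type*} [DecidableEq Ω] (G : Subgroup (Equiv.Perm Ω))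
    (w : Finset Ω) : Prop :=
  ∀ g ∈ G, g • w = w → g = 1

/-- The arity of a relation: the set of cardinalities of its members. -/
def arity {Ω : Type*} (R : Set (Finset Ω)) : Set ℕ := {n | ∃ x ∈ R, x.card = n}

/-- `G` is orbit closed: every permutation mapping each finite subset into its
`G`-orbit already lies in `G`. -/
def IsOrbitClosed {Ω : Type*} [DecidableEq Ω] (G : Subgroup (Equiv.Perm Ω)) : Prop :=
  ∀ g : Equiv.Perm Ω, (∀ x : Finset Ω, ∃ h ∈ G, g • x = h • x) → g ∈ G

/-- `G` is set-transitive: transitive on `k`-element subsets for every `k`. -/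
def IsSetTransitive {Ω : Type*} [DecidableEq Ω] (G : Subgroup (Equiv.Perm Ω)) : Prop :=
  ∀ x y : Finset Ω, x.card = y.card → ∃ g ∈ G, g • x = y

/-- A permutation group is primitive if it is transitive and every block of the
action is trivial (a subsingleton or the whole set). -/
def IsPrimitivePermGroup {Ω : Type*} (G : Subgroup (Equiv.Perm Ω)) : Prop :=
  MulAction.IsPretransitive ↥G Ω ∧
    ∀ B : Set Ω, MulAction.IsBlock ↥G B → B.Subsingleton ∨ B = Set.univ

/-!
If `g` maps every `k`-set into its `G`-orbit, then it does so for every `m`-set with `m ≤ k`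
(and, taking complements, with `m ≥ n - k`); since `G ≤ G(R)` and `R` only has members of
such sizes, `g` preserves `R`. The descent from `m + 1` to `m` uses that the inclusion map
from functions on `m`-sets to functions on `(m + 1)`-sets, `f ↦ (y ↦ ∑_{x ⊆ y} f x)`, is
injective when `2m < n` (Gottlieb–Kantor): applied to `1_O - 1_O ∘ g`, where `O` is the
`G`-orbit of an `m`-set, it shows `g` preserves `O`. Injectivity follows from the
up-down identity `‖∂⁺f‖² = ‖∂⁻f‖² + (n - 2m) ‖f‖²`.
-/

open Finset

section Inclusion

variable {α R : Type*}

theorem sum_sq_sum_filter [CommSemiring R] (S : Finset α) {β : Type*} (T : Finset β)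
    (r : α → β → Prop) [∀ x y, Decidable (r x y)] (f : α → R) :
    ∑ y ∈ T, (∑ x ∈ S with r x y, f x) ^ 2 =
      ∑ x ∈ S, ∑ x' ∈ S, #{y ∈ T | r x y ∧ r x' y} * (f x * f x') := by
  simp_rw [sq, sum_filter, sum_mul_sum, ite_zero_mul_ite_zero]
  rw [sum_comm]
  refine sum_congr rfl fun x _ => ?_
  rw [sum_comm]
  refine sum_congr rfl fun x' _ => ?_
  rw [← sum_filter, sum_const, nsmul_eq_mul]

variable [Fintype α] [DecidableEq α]

theorem card_common_supersets_eq [CommRing R] {m : ℕ} {x x' : Finset α}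
    (hx : #x = m + 1) (hx' : #x' = m + 1) :
    (#{y ∈ powersetCard (m + 2) univ | x ⊆ y ∧ x' ⊆ y} : R) =
      #{z ∈ powersetCard m univ | z ⊆ x ∧ z ⊆ x'} +
        if x = x' then (Fintype.card α - 2 * (m + 1) : R) else 0 := by
  have hsub : {z ∈ powersetCard m (univ : Finset α) | z ⊆ x ∧ z ⊆ x'} =
      powersetCard m (x ∩ x') := by
    ext z; simp [mem_powersetCard, subset_inter_iff, and_comm]
  simp_rw [← union_subset_iff, hsub, card_powersetCard]
  split_ifs with hxx
  · subst hxx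
    rw [union_self, card_filter_powersetCard_subset _ _ _ (subset_univ _) (by omega), card_univ,
      inter_self, hx, show m + 2 - (m + 1) = 1 by omega, Nat.choose_one_right,
      Nat.choose_succ_self_right]
    have : m + 1 ≤ Fintype.card α := hx ▸ card_le_univ x
    push_cast [Nat.cast_sub this]
    ring
  rw [add_zero]
  congr 1
  -- both counts are `1` if `#(x ∩ x') = m` and `0` otherwise
  have hunion : #(x ∩ x') + #(x ∪ x') = 2 * (m + 1) := by
    rw [card_inter_add_card_union, hx, hx']; ring
  have hinter : #(x ∩ x') ≤ m := by
    by_contra! h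
    have hxx' : x ⊆ x' := inter_eq_left.mp <|
      eq_of_subset_of_card_le inter_subset_left (by omega)
    exact hxx (eq_of_subset_of_card_le hxx' (by omega))
  rcases hinter.lt_or_eq with hlt | heq
  · rw [Nat.choose_eq_zero_of_lt hlt, card_eq_zero, filter_eq_empty_iff]
    intro y hy hxy
    have := card_le_card hxy
    rw [mem_powersetCard_univ.mp hy] at this
    omega
  · rw [heq, card_filter_powersetCard_subset _ _ _ (subset_univ _) (by omega), Nat.choose_self,
      show m + 2 - #(x ∪ x') = 0 by omega, Nat.choose_zero_right]

theorem sum_sq_sum_powersetCard_eq [CommRing R] (m : ℕ) (f : Finset α → R) :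
    ∑ y ∈ powersetCard (m + 2) univ, (∑ x ∈ powersetCard (m + 1) y, f x) ^ 2 =
      ∑ z ∈ powersetCard m univ,
          (∑ x ∈ powersetCard (m + 1) (univ : Finset α) with z ⊆ x, f x) ^ 2 +
        (Fintype.card α - 2 * (m + 1) : R) * ∑ x ∈ powersetCard (m + 1) univ, f x ^ 2 := by
  have hsubsets (y : Finset α) :
      powersetCard (m + 1) y = {x ∈ powersetCard (m + 1) (univ : Finset α) | x ⊆ y} := by
    ext x; simp [mem_powersetCard, and_comm]
  conv_lhs => enter [2, y]; rw [hsubsets]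
  rw [sum_sq_sum_filter, sum_sq_sum_filter]
  have hcount : ∀ x ∈ powersetCard (m + 1) (univ : Finset α), ∀ x' ∈ powersetCard (m + 1) univ,
      (#{y ∈ powersetCard (m + 2) univ | x ⊆ y ∧ x' ⊆ y} : R) * (f x * f x') =
        #{z ∈ powersetCard m univ | z ⊆ x ∧ z ⊆ x'} * (f x * f x') +
          if x = x' then (Fintype.card α - 2 * (m + 1) : R) * f x ^ 2 else 0 := by
    intro x hx x' hx'
    rw [card_common_supersets_eq (mem_powersetCard_univ.mp hx) (mem_powersetCard_univ.mp hx'),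
      add_mul]
    split_ifs with h <;> simp [h, sq]
  rw [sum_congr rfl fun x hx => sum_congr rfl (hcount x hx)]
  simp only [sum_add_distrib, sum_ite_eq, sum_ite_mem, inter_self, mul_sum]

theorem eq_zero_of_forall_sum_powersetCard_eq_zero [CommRing R] [LinearOrder R]
    [IsStrictOrderedRing R] {m : ℕ} (hm : 2 * m < Fintype.card α) {f : Finset α → R}
    (hf : ∀ y : Finset α, #y = m + 1 → ∑ x ∈ powersetCard m y, f x = 0) {x : Finset α}
    (hx : #x = m) : f x = 0 := by
  cases m with
  | zero =>
    obtain rfl := card_eq_zero.mp hx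
    obtain ⟨a⟩ := Fintype.card_pos_iff.mp (by omega : 0 < Fintype.card α)
    simpa using hf {a} (card_singleton a)
  | succ m =>
    have hsq := sum_sq_sum_powersetCard_eq m f
    rw [sum_eq_zero fun y hy => by rw [hf y (mem_powersetCard_univ.mp hy), sq, mul_zero]] at hsq
    have hpos : (0 : R) < Fintype.card α - 2 * (m + 1) := by
      rw [sub_pos]; exact_mod_cast hm
    have hdown_nonneg : 0 ≤ ∑ z ∈ powersetCard m (univ : Finset α),
        (∑ x ∈ powersetCard (m + 1) (univ : Finset α) with z ⊆ x, f x) ^ 2 :=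
      sum_nonneg fun z _ => sq_nonneg _
    have hsum : ∑ x ∈ powersetCard (m + 1) univ, f x ^ 2 = 0 :=
      le_antisymm (nonpos_of_mul_nonpos_right (by linarith) hpos)
        (sum_nonneg fun x _ => sq_nonneg (f x))
    exact pow_eq_zero_iff two_ne_zero |>.mp <|
      (sum_eq_zero_iff_of_nonneg fun x _ => sq_nonneg (f x)).mp hsum x
        (mem_powersetCard_univ.mpr hx)

end Inclusion

section Action

variable {α H : Type*} [Group H] [MulAction H α] [DecidableEq α]

theorem sum_powersetCard_smul_finset {M : Type*} [AddCommMonoid M] (a : H) (m : ℕ)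
    (y : Finset α) (φ : Finset α → M) :
    ∑ x ∈ powersetCard m (a • y), φ x = ∑ x ∈ powersetCard m y, φ (a • x) := by
  have hmap (s : Finset α) : a • s = s.map (toPerm a : Equiv.Perm α).toEmbedding := by
    rw [smul_finset_def, map_eq_image]; rfl
  rw [hmap, powersetCard_map, sum_map]
  simp [hmap]

variable [Fintype α]

theorem Finset.smul_finset_compl (a : H) (s : Finset α) : a • sᶜ = (a • s)ᶜ := by
  simp only [compl_eq_univ_sdiff, smul_finset_sdiff, smul_finset_univ]

theorem exists_smul_eq_of_card_succ (G : Subgroup H) (g : H) {m : ℕ}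
    (hm : 2 * m < Fintype.card α)
    (hg : ∀ y : Finset α, #y = m + 1 → ∃ h ∈ G, g • y = h • y) {x : Finset α} (hx : #x = m) :
    ∃ h ∈ G, g • x = h • x := by
  classical
  set χ : Finset α → ℤ := fun z => if z ∈ orbit G x then 1 else 0 with hχ
  have hχG (h : H) (hh : h ∈ G) (z : Finset α) : χ (h • z) = χ z := by
    simp only [hχ, ← orbit_eq_iff, ← orbit_smul (⟨h, hh⟩ : G) z, Subgroup.mk_smul]
  have hfx : χ x - χ (g • x) = 0 := by
    refine eq_zero_of_forall_sum_powersetCard_eq_zero (f := fun z => χ z - χ (g • z)) hm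
      (fun y hy => ?_) hx
    obtain ⟨h, hh, hgy⟩ := hg y hy
    rw [sum_sub_distrib, sub_eq_zero, ← sum_powersetCard_smul_finset g m y χ, hgy,
      sum_powersetCard_smul_finset]
    simp only [hχG h hh]
  have hgx : g • x ∈ orbit G x := by
    by_contra hgx
    simp [hχ, hgx, mem_orbit_self] at hfx
  obtain ⟨⟨h, hh⟩, hhx⟩ := hgx
  exact ⟨h, hh, hhx.symm⟩

theorem exists_smul_eq_of_card_le (G : Subgroup H) (g : H) {k : ℕ}
    (hk : 2 * k ≤ Fintype.card α + 1)
    (hg : ∀ y : Finset α, #y = k → ∃ h ∈ G, g • y = h • y) {m : ℕ} (hm : m ≤ k) :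
    ∀ x : Finset α, #x = m → ∃ h ∈ G, g • x = h • x := by
  induction hm using Nat.decreasingInduction with
  | self => exact hg
  | of_succ m hmk ih => exact fun x => exists_smul_eq_of_card_succ G g (by omega) ih

end Action

theorem kClosure_le_invGroup_general {Ω : Type*} [Fintype Ω] [DecidableEq Ω] (n : ℕ)
    (hn : Fintype.card Ω = n) (G : Subgroup (Equiv.Perm Ω)) (R : Set (Finset Ω))
    (hGR : G ≤ invGroup R) (k : ℕ) (hk2 : 2 * k ≤ n + 1)
    (hR : ∀ x ∈ R, ¬(k < x.card ∧ x.card < n - k))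
    (g : Equiv.Perm Ω) (hg : ∀ x : Finset Ω, x.card = k → ∃ h ∈ G, g • x = h • x) :
    g ∈ invGroup R := by
  intro x hx
  have hsmall (y : Finset Ω) (hy : #y ≤ k) : ∃ h ∈ G, g • y = h • y :=
    exists_smul_eq_of_card_le G g (hn ▸ hk2) hg hy y rfl
  obtain ⟨h, hh, hgx⟩ : ∃ h ∈ G, g • x = h • x := by
    rcases le_or_gt #x k with hle | hgt
    · exact hsmall x hle
    · have hxc : #xᶜ ≤ k := by rw [card_compl]; have := hR x hx; omega
      obtain ⟨h, hh, hgxc⟩ := hsmall xᶜ hxc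
      refine ⟨h, hh, compl_injective ?_⟩
      rwa [← smul_finset_compl, ← smul_finset_compl]
  rw [hgx]
  exact hGR hh x hx

/-- If `G ≤ G(R)`, `1 ≤ k`, `2k ≤ n + 1`, and no member of `R` has cardinality
strictly between `k` and `n - k`, then every permutation `g` mapping each
`k`-element subset into its `G`-orbit lies in `G(R)`. -/
theorem kClosure_le_invGroup {Ω : Type*} [Fintype Ω] [DecidableEq Ω] (n : ℕ)
    (hn : Fintype.card Ω = n) (G : Subgroup (Equiv.Perm Ω)) (R : Set (Finset Ω))
    (hGR : G ≤ invGroup R) (k : ℕ) (hk1 : 1 ≤ k) (hk2 : 2 * k ≤ n + 1)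
    (hR : ∀ x ∈ R, ¬(k < x.card ∧ x.card < n - k))
    (g : Equiv.Perm Ω) (hg : ∀ x : Finset Ω, x.card = k → ∃ h ∈ G, g • x = h • x) :
    g ∈ invGroup R :=
  kClosure_le_invGroup_general n hn G R hGR k hk2 hR g hg
end

section
/- (Basic Lemma, part (i).) Let Ω be a finite set, let R be an unordered relation on Ω, let H = G(R), and suppose H has a regular set w whose cardinality |w| does not belong to the arity ar(R). Then every subgroup G of H is a relation group on Ω; in fact G = G(R ∪ w^G), where w^G denotes the G-orbit of w. -/
open Pointwise MulAction

/-- Basic Lemma, part (i): if `H = G(R)` has a regular set `w` whose cardinality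
does not lie in the arity of `R`, then every subgroup `G` of `H` is a relation
group; in fact `G = G(R ∪ w^G)`. -/
theorem basicLemma_part_i {Ω : Type*} [Fintype Ω] [DecidableEq Ω]
    (R : Set (Finset Ω)) (H : Subgroup (Equiv.Perm Ω)) (hH : H = invGroup R)
    (w : Finset Ω) (hreg : IsRegularSet H w) (har : w.card ∉ arity R)
    (G : Subgroup (Equiv.Perm Ω)) (hG : G ≤ H) :
    G = invGroup (R ∪ MulAction.orbit ↥G w) ∧ IsRelationGroup G := by
  have key : G = invGroup (R ∪ MulAction.orbit ↥G w) := by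
    have hcard : ∀ x ∈ MulAction.orbit ↥G w, Finset.card x = w.card := by
      rintro - ⟨h, rfl⟩
      exact Finset.card_smul_finset _ _
    apply le_antisymm
    · intro g hg x hx
      rcases hx with hx | hx
      · left
        have : g ∈ invGroup R := hH ▸ hG hg
        exact this x hx
      · right
        rcases hx with ⟨h, rfl⟩
        exact ⟨⟨g, hg⟩ * h, by simp [mul_smul]⟩
    · intro g hg
      -- g preserves R
      have hgH : g ∈ H := by
        rw [hH]
        intro x hx
        rcases hg x (Or.inl hx) with h | h
        · exact h
        · exfalso
          apply har
          refine ⟨x, hx, ?_⟩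
          have := hcard _ h
          rwa [Finset.card_smul_finset] at this
      -- g • w is in the orbit
      have hw : g • w ∈ R ∪ MulAction.orbit ↥G w :=
        hg w (Or.inr ⟨1, by simp⟩)
      rcases hw with h | ⟨k, hk⟩
      · exact absurd ⟨g • w, h, Finset.card_smul_finset _ _⟩ har
      · have hk' : ((k : Equiv.Perm Ω)⁻¹ * g) • w = w := by
          rw [mul_smul, ← hk]; simp [Subgroup.smul_def, ← mul_smul]
        have hmem : (k : Equiv.Perm Ω)⁻¹ * g ∈ H :=
          H.mul_mem (H.inv_mem (hG k.2)) hgH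
        have := hreg _ hmem hk'
        rw [inv_mul_eq_one] at this
        rw [← this]; exact k.2
  exact ⟨key, _, key⟩
end

section
/- (Basic Lemma, part (ii).) Let Ω be a finite set and let H be a subgroup of Sym(Ω) that is not set-transitive and is maximal among the subgroups of Sym(Ω) that are not set-transitive. Suppose H has a regular set on Ω. Then every subgroup G of H is a relation group on Ω. -/
open Pointwise MulAction

/-!
Let `w` be a regular set of `H` and `u` a set of another size on whose size `H` is not
transitive. For `G ≤ H`, the `G`-orbit of `w` together with the `H`-orbit of `u` is a relation with
invariance group `G`: since permutations preserve sizes, a permutation preserving the relation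
preserves the `H`-orbit of `u`, hence lies in `H` by maximality (a larger group would be
set-transitive and move `u` out of its `H`-orbit); it then maps `w` to some `g • w` with `g ∈ G`,
so it equals `g` by regularity.

Such `w` and `u` exist. Otherwise `H` is transitive on the sets of every size but `|w| = k + 1`,
and by complementation `|Ω| = 2k + 2`. Counting with orbit-stabilizer, for a `k`-set `x`,
`C(2k+2, k) · |H_x| = |H| < C(2k+2, k+1) = C(2k+2, k) · (k+2)/(k+1)`, so `H_x = 1` and `x` is a
regular set whose size differs from `k + 1`.
-/

lemma ncard_setOf_card_eq {Ω : Type*} [Fintype Ω] (k : ℕ) :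
    {y : Finset Ω | y.card = k}.ncard = (Fintype.card Ω).choose k := by
  rw [← Finset.card_univ, ← Finset.card_powersetCard, ← Set.ncard_coe_finset]
  congr 1
  ext
  simp

section

variable {Ω : Type*} [DecidableEq Ω]

def IsSetTransitiveAt (H : Subgroup (Equiv.Perm Ω)) (k : ℕ) : Prop :=
  ∀ x y : Finset Ω, x.card = k → y.card = k → ∃ g ∈ H, g • x = y

lemma isSetTransitive_iff_forall_isSetTransitiveAt {H : Subgroup (Equiv.Perm Ω)} :
    IsSetTransitive H ↔ ∀ k, IsSetTransitiveAt H k :=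
  ⟨fun h _ x y hx hy => h x y (hx.trans hy.symm), fun h x y hxy => h _ x y hxy rfl⟩

lemma isSetTransitiveAt_zero {H : Subgroup (Equiv.Perm Ω)} : IsSetTransitiveAt H 0 := by
  intro x y hx hy
  exact ⟨1, H.one_mem, by rw [Finset.card_eq_zero.mp hx, Finset.card_eq_zero.mp hy, one_smul]⟩

lemma orbit_subset_setOf_card_eq (H : Subgroup (Equiv.Perm Ω)) (x : Finset Ω) :
    orbit H x ⊆ {y | y.card = x.card} := by
  rintro _ ⟨g, rfl⟩
  simp [Subgroup.smul_def]

lemma isSetTransitiveAt_card_iff {H : Subgroup (Equiv.Perm Ω)} (x : Finset Ω) :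
    IsSetTransitiveAt H x.card ↔ orbit H x = {y | y.card = x.card} := by
  constructor
  · intro h
    refine (orbit_subset_setOf_card_eq H x).antisymm fun y hy => ?_
    obtain ⟨g, hg, rfl⟩ := h x y rfl hy
    exact ⟨⟨g, hg⟩, rfl⟩
  · intro h y z hy hz
    have hzy : z ∈ orbit H y := orbit_eq_iff.mpr (h ▸ hy : y ∈ orbit H x) ▸ (h ▸ hz)
    obtain ⟨g, rfl⟩ := hzy
    exact ⟨g, g.2, rfl⟩

lemma arity_orbit (G : Subgroup (Equiv.Perm Ω)) (x : Finset Ω) :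
    arity (orbit G x) = {x.card} := by
  ext n
  constructor
  · rintro ⟨y, hy, rfl⟩
    exact orbit_subset_setOf_card_eq G x hy
  · rintro rfl
    exact ⟨x, mem_orbit_self x, rfl⟩

lemma isRegularSet_iff_stabilizer_eq_bot {H : Subgroup (Equiv.Perm Ω)} {w : Finset Ω} :
    IsRegularSet H w ↔ stabilizer H w = ⊥ := by
  simp only [IsRegularSet, Subgroup.eq_bot_iff_forall, mem_stabilizer_iff, Subtype.forall,
    Subgroup.mk_smul, Subgroup.mk_eq_one]

lemma card_eq_ncard_orbit_mul_card_stabilizer (H : Subgroup (Equiv.Perm Ω)) (x : Finset Ω) :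
    Nat.card H = (orbit H x).ncard * Nat.card (stabilizer H x) := by
  rw [← index_stabilizer, mul_comm, Subgroup.card_mul_index]

lemma card_eq_ncard_orbit_of_isRegularSet {H : Subgroup (Equiv.Perm Ω)} {w : Finset Ω}
    (hw : IsRegularSet H w) : Nat.card H = (orbit H w).ncard := by
  rw [card_eq_ncard_orbit_mul_card_stabilizer H w, isRegularSet_iff_stabilizer_eq_bot.mp hw,
    Subgroup.card_bot, mul_one]

variable [Fintype Ω]

lemma Equiv.Perm.smul_finset_compl (g : Equiv.Perm Ω) (s : Finset Ω) : g • sᶜ = (g • s)ᶜ := by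
  rw [Finset.compl_eq_univ_sdiff, Finset.compl_eq_univ_sdiff, Finset.smul_finset_sdiff,
    Finset.smul_finset_univ]

lemma IsSetTransitiveAt.of_card_sub {H : Subgroup (Equiv.Perm Ω)} {k : ℕ}
    (h : IsSetTransitiveAt H (Fintype.card Ω - k)) : IsSetTransitiveAt H k := by
  intro x y hx hy
  obtain ⟨g, hg, hgxy⟩ := h xᶜ yᶜ (by rw [Finset.card_compl, hx]) (by rw [Finset.card_compl, hy])
  exact ⟨g, hg, compl_injective (by rwa [← Equiv.Perm.smul_finset_compl])⟩

lemma ncard_orbit_lt_choose {H : Subgroup (Equiv.Perm Ω)} {w : Finset Ω}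
    (hw : ¬ IsSetTransitiveAt H w.card) :
    (orbit H w).ncard < (Fintype.card Ω).choose w.card := by
  rw [← ncard_setOf_card_eq]
  refine Set.ncard_lt_ncard ?_ (Set.toFinite _)
  exact Set.ssubset_iff_subset_ne.mpr
    ⟨orbit_subset_setOf_card_eq H w, (isSetTransitiveAt_card_iff w).not.mp hw⟩

lemma le_invGroup_orbit (G : Subgroup (Equiv.Perm Ω)) (x : Finset Ω) :
    G ≤ invGroup (orbit G x) := by
  intro g hg y hy
  simpa [Subgroup.smul_def] using mem_orbit_of_mem_orbit (⟨g, hg⟩ : G) hy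

lemma invGroup_union_of_disjoint_arity {R₁ R₂ : Set (Finset Ω)}
    (h : Disjoint (arity R₁) (arity R₂)) :
    invGroup (R₁ ∪ R₂) = invGroup R₁ ⊓ invGroup R₂ := by
  have hcard (g : Equiv.Perm Ω) (x : Finset Ω) : (g • x).card = x.card :=
    Finset.card_smul_finset g x
  apply le_antisymm
  · intro g hg
    refine ⟨fun x hx => ?_, fun x hx => ?_⟩
    · refine (hg x (Or.inl hx)).resolve_right fun hgx => ?_
      exact h.ne_of_mem ⟨x, hx, rfl⟩ ⟨g • x, hgx, hcard g x⟩ rfl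
    · refine (hg x (Or.inr hx)).resolve_left fun hgx => ?_
      exact h.ne_of_mem ⟨g • x, hgx, hcard g x⟩ ⟨x, hx, rfl⟩ rfl
  · rintro g ⟨hg₁, hg₂⟩ x (hx | hx)
    exacts [Or.inl (hg₁ x hx), Or.inr (hg₂ x hx)]

variable {H : Subgroup (Equiv.Perm Ω)}

lemma invGroup_orbit_eq_of_maximal
    (hmax : ∀ H' : Subgroup (Equiv.Perm Ω), H < H' → IsSetTransitive H') {u : Finset Ω}
    (hu : ¬ IsSetTransitiveAt H u.card) : invGroup (orbit H u) = H := by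
  refine (eq_of_le_of_not_lt (le_invGroup_orbit H u) fun hlt => hu ?_).symm
  refine (isSetTransitiveAt_card_iff u).mpr
    ((orbit_subset_setOf_card_eq H u).antisymm fun v hv => ?_)
  obtain ⟨p, hp, rfl⟩ := hmax _ hlt u v hv.symm
  exact hp u (mem_orbit_self u)

lemma invGroup_orbit_inf_eq_of_isRegularSet {G : Subgroup (Equiv.Perm Ω)} (hGH : G ≤ H)
    {w : Finset Ω} (hw : IsRegularSet H w) : invGroup (orbit G w) ⊓ H = G := by
  refine le_antisymm (fun f ⟨hfw, hfH⟩ => ?_) (le_inf (le_invGroup_orbit G w) hGH)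
  obtain ⟨⟨g, hg⟩, hgw⟩ := hfw w (mem_orbit_self w)
  change g • w = f • w at hgw
  have hgf : g⁻¹ * f = 1 := hw _ (H.mul_mem (H.inv_mem (hGH hg)) hfH) <| by
    rw [mul_smul, ← hgw, inv_smul_smul]
  rwa [inv_mul_eq_one.mp hgf] at hg

theorem isRelationGroup_of_isRegularSet
    (hmax : ∀ H' : Subgroup (Equiv.Perm Ω), H < H' → IsSetTransitive H') {w : Finset Ω}
    (hw : IsRegularSet H w) {m : ℕ} (hm : ¬ IsSetTransitiveAt H m) (hmw : m ≠ w.card)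
    {G : Subgroup (Equiv.Perm Ω)} (hGH : G ≤ H) : IsRelationGroup G := by
  obtain ⟨u, -, rfl, -⟩ : ∃ u v : Finset Ω, u.card = m ∧ v.card = m ∧ ∀ g ∈ H, g • u ≠ v := by
    simpa [IsSetTransitiveAt] using hm
  refine ⟨orbit G w ∪ orbit H u, ?_⟩
  rw [invGroup_union_of_disjoint_arity (by simpa [arity_orbit] using hmw.symm),
    invGroup_orbit_eq_of_maximal hmax hm, invGroup_orbit_inf_eq_of_isRegularSet hGH hw]

lemma isRegularSet_of_isSetTransitiveAt {x w : Finset Ω}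
    (hn : Fintype.card Ω = 2 * (x.card + 1)) (hw : IsRegularSet H w) (hwx : w.card = x.card + 1)
    (hwt : ¬ IsSetTransitiveAt H w.card) (hx : IsSetTransitiveAt H x.card) :
    IsRegularSet H x := by
  set k := x.card
  set s := Nat.card (stabilizer H x)
  have horbit : (orbit H x).ncard = (Fintype.card Ω).choose k := by
    rw [(isSetTransitiveAt_card_iff x).mp hx, ncard_setOf_card_eq]
  have hlt : (Fintype.card Ω).choose k * s < (Fintype.card Ω).choose (k + 1) := by
    rw [← horbit, ← card_eq_ncard_orbit_mul_card_stabilizer,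
      card_eq_ncard_orbit_of_isRegularSet hw, ← hwx]
    exact ncard_orbit_lt_choose hwt
  have hchoose := Nat.choose_succ_right_eq (Fintype.card Ω) k
  rw [show Fintype.card Ω - k = k + 2 by omega] at hchoose
  have hs : s * (k + 1) < k + 2 :=
    Nat.lt_of_mul_lt_mul_left (a := (Fintype.card Ω).choose k) (by nlinarith)
  have hs_pos : 0 < s := Nat.card_pos
  have hs_one : s = 1 := by nlinarith
  exact isRegularSet_iff_stabilizer_eq_bot.mpr (Subgroup.card_eq_one.mp hs_one)

lemma exists_isRegularSet_not_isSetTransitiveAt (hnst : ¬ IsSetTransitive H) {w : Finset Ω}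
    (hw : IsRegularSet H w) :
    ∃ (x : Finset Ω) (m : ℕ), IsRegularSet H x ∧ ¬ IsSetTransitiveAt H m ∧ m ≠ x.card := by
  by_cases hex : ∃ m, ¬ IsSetTransitiveAt H m ∧ m ≠ w.card
  · obtain ⟨m, hm⟩ := hex
    exact ⟨w, m, hw, hm⟩
  replace hex (m : ℕ) (hmw : m ≠ w.card) : IsSetTransitiveAt H m :=
    by_contra fun h => hex ⟨m, h, hmw⟩
  obtain ⟨m, hm⟩ := not_forall.mp (isSetTransitive_iff_forall_isSetTransitiveAt.not.mp hnst)
  obtain rfl : m = w.card := by_contra fun h => hm (hex m h)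
  have hcompl : Fintype.card Ω - w.card = w.card :=
    by_contra fun h => hm (hex _ h).of_card_sub
  obtain ⟨k, hk⟩ : ∃ k, w.card = k + 1 :=
    Nat.exists_eq_succ_of_ne_zero fun h => hm (h ▸ isSetTransitiveAt_zero)
  obtain ⟨x, -, rfl⟩ := Finset.exists_subset_card_eq (s := (Finset.univ : Finset Ω)) (n := k)
    (by rw [Finset.card_univ]; omega)
  have hxt : IsSetTransitiveAt H x.card := hex _ (by omega)
  exact ⟨x, w.card, isRegularSet_of_isSetTransitiveAt (by omega) hw hk hm hxt, hm, by omega⟩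

end

/-- Basic Lemma, part (ii): if `H` is not set-transitive, is maximal among the
subgroups of `Sym Ω` that are not set-transitive, and has a regular set,
then every subgroup of `H` is a relation group. -/
theorem basicLemma_part_ii {Ω : Type*} [Fintype Ω] [DecidableEq Ω]
    (H : Subgroup (Equiv.Perm Ω)) (hnst : ¬ IsSetTransitive H)
    (hmax : ∀ H' : Subgroup (Equiv.Perm Ω), H < H' → IsSetTransitive H')
    (hreg : ∃ w : Finset Ω, IsRegularSet H w)
    (G : Subgroup (Equiv.Perm Ω)) (hG : G ≤ H) :
    IsRelationGroup G := by
  obtain ⟨w, hw⟩ := hreg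
  obtain ⟨x, m, hx, hm, hmx⟩ := exists_isRegularSet_not_isSetTransitiveAt hnst hw
  exact isRelationGroup_of_isRegularSet hmax hx hm hmx hG
end

section
/- Let Δ be a finite set of size d and Σ a finite set of size s. Let K be a transitive permutation group on Δ having a regular set of size r_Δ with 2·r_Δ ≠ d, and let L be a transitive permutation group on Σ having a regular set of size r_Σ. Then the imprimitive wreath product K ≀ L has a regular set on Δ × Σ of size r_Σ·r_Δ + (s − r_Σ)·(d − r_Δ) (which, computed in the integers, equals r_Σ·d + (s − 2r_Σ)·(d − r_Δ)). -/
open Pointwise MulAction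

/-- The imprimitive wreath product `K ≀ L` as a subgroup of `Sym (Δ × Γ)`:
all permutations `g` of `Δ × Γ` of the form `g (δ, i) = (k_i δ, σ i)`
with `σ ∈ L` and each `k_i ∈ K`. -/
def wreathProduct {Δ Γ : Type*} (K : Subgroup (Equiv.Perm Δ)) (L : Subgroup (Equiv.Perm Γ)) :
    Subgroup (Equiv.Perm (Δ × Γ)) where
  carrier := {g | ∃ σ ∈ L, ∃ k : Γ → Equiv.Perm Δ, (∀ i, k i ∈ K) ∧
      ∀ p : Δ × Γ, g p = (k p.2 p.1, σ p.2)}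
  one_mem' := ⟨1, L.one_mem, fun _ => 1, fun _ => K.one_mem, fun _ => rfl⟩
  mul_mem' := by
    rintro a b ⟨σa, hσa, ka, hka, ha⟩ ⟨σb, hσb, kb, hkb, hb⟩
    refine ⟨σa * σb, L.mul_mem hσa hσb, fun i => ka (σb i) * kb i,
      fun i => K.mul_mem (hka _) (hkb _), fun p => ?_⟩
    have : (a * b) p = a (b p) := rfl
    rw [this, hb p, ha]
    rfl
  inv_mem' := by
    rintro g ⟨σ, hσ, k, hk, hg⟩
    refine ⟨σ⁻¹, L.inv_mem hσ, fun i => (k (σ⁻¹ i))⁻¹, fun i => K.inv_mem (hk _), fun p => ?_⟩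
    apply g.injective
    rw [show g (g⁻¹ p) = p from g.apply_symm_apply p, hg]
    simp

/-!
Take `w = wΔ ×ˢ wΓ ∪ wΔᶜ ×ˢ wΓᶜ`. If `g = (k, σ) ∈ K ≀ L` stabilizes `w` and `σ` moved some
`i` into or out of `wΓ`, then `k i` would map `wΔ` onto its complement, forcing `2 |wΔ| = |Δ|`.
So `σ` stabilizes `wΓ` and is trivial, after which every `k i` stabilizes `wΔ` and is trivial.
-/

namespace Equiv.Perm

variable {α : Type*} [DecidableEq α]

theorem smul_finset_eq_iff (g : Perm α) (s t : Finset α) :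
    g • s = t ↔ ∀ x, g x ∈ t ↔ x ∈ s := by
  rw [Finset.ext_iff, ← g.forall_congr_right]
  simp only [← Equiv.Perm.smul_def, Finset.smul_mem_smul_finset_iff, iff_comm]

theorem two_mul_card_eq_of_smul_finset_eq_compl [Fintype α] {g : Perm α} {s : Finset α}
    (h : g • s = sᶜ) : 2 * s.card = Fintype.card α := by
  rw [two_mul]
  nth_rewrite 2 [← Finset.card_smul_finset g s]
  rw [h, Finset.card_add_card_compl]

end Equiv.Perm

section AgreementSet

variable {Δ Γ : Type*} [Fintype Δ] [DecidableEq Δ] [Fintype Γ] [DecidableEq Γ]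

def agreementSet (u : Finset Δ) (v : Finset Γ) : Finset (Δ × Γ) :=
  u ×ˢ v ∪ uᶜ ×ˢ vᶜ

theorem mem_agreementSet {u : Finset Δ} {v : Finset Γ} {p : Δ × Γ} :
    p ∈ agreementSet u v ↔ (p.1 ∈ u ↔ p.2 ∈ v) := by
  simp only [agreementSet, Finset.mem_union, Finset.mem_product, Finset.mem_compl]
  tauto

theorem card_agreementSet (u : Finset Δ) (v : Finset Γ) :
    (agreementSet u v).card =
      v.card * u.card + (Fintype.card Γ - v.card) * (Fintype.card Δ - u.card) := by
  have hdisj : Disjoint (u ×ˢ v) (uᶜ ×ˢ vᶜ) :=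
    Finset.disjoint_product.2 (.inl disjoint_compl_right)
  rw [agreementSet, Finset.card_union_of_disjoint hdisj, Finset.card_product,
    Finset.card_product, Finset.card_compl, Finset.card_compl, mul_comm u.card,
    mul_comm (Fintype.card Δ - u.card)]

theorem isRegularSet_agreementSet {K : Subgroup (Equiv.Perm Δ)} {L : Subgroup (Equiv.Perm Γ)}
    {u : Finset Δ} {v : Finset Γ} (hu : IsRegularSet K u) (hhalf : 2 * u.card ≠ Fintype.card Δ)
    (hv : IsRegularSet L v) : IsRegularSet (wreathProduct K L) (agreementSet u v) := by
  rintro g ⟨σ, hσ, k, hk, hg⟩ hgw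
  have hfix : ∀ δ i, ((k i δ ∈ u ↔ σ i ∈ v) ↔ (δ ∈ u ↔ i ∈ v)) := fun δ i => by
    simpa only [hg, mem_agreementSet] using (g.smul_finset_eq_iff _ _).1 hgw (δ, i)
  have hσv : ∀ i, σ i ∈ v ↔ i ∈ v := fun i => by
    by_contra hi
    refine hhalf (Equiv.Perm.two_mul_card_eq_of_smul_finset_eq_compl (g := k i) ?_)
    refine (Equiv.Perm.smul_finset_eq_iff _ u uᶜ).2 fun δ => ?_
    rw [Finset.mem_compl]
    have := hfix δ i
    tauto
  have hσ1 : σ = 1 := hv σ hσ ((σ.smul_finset_eq_iff v v).2 hσv)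
  have hk1 : ∀ i, k i = 1 := fun i => by
    refine hu _ (hk i) ((Equiv.Perm.smul_finset_eq_iff _ u u).2 fun δ => ?_)
    have := hfix δ i
    rw [hσ1, Equiv.Perm.one_apply] at this
    tauto
  ext p : 1
  rw [hg, hσ1, hk1]
  rfl

end AgreementSet

theorem wreathProduct_regular_set_general {Δ Γ : Type*}
    [Fintype Δ] [DecidableEq Δ] [Fintype Γ] [DecidableEq Γ]
    (K : Subgroup (Equiv.Perm Δ)) (L : Subgroup (Equiv.Perm Γ))
    (wΔ : Finset Δ) (hwΔ : IsRegularSet K wΔ) (hhalf : 2 * wΔ.card ≠ Fintype.card Δ)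
    (wΓ : Finset Γ) (hwΓ : IsRegularSet L wΓ) :
    ∃ w : Finset (Δ × Γ), IsRegularSet (wreathProduct K L) w ∧
      w.card = wΓ.card * wΔ.card +
        (Fintype.card Γ - wΓ.card) * (Fintype.card Δ - wΔ.card) :=
  ⟨agreementSet wΔ wΓ, isRegularSet_agreementSet hwΔ hhalf hwΓ, card_agreementSet wΔ wΓ⟩

/-- If the transitive group `K` on `Δ` has a regular set of size `r_Δ` with
`2 r_Δ ≠ |Δ|` and the transitive group `L` on `Γ` has a regular set of size
`r_Σ`, then `K ≀ L` has a regular set of size `r_Σ·r_Δ + (s - r_Σ)(d - r_Δ)`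
on `Δ × Γ`. -/
theorem wreathProduct_regular_set {Δ Γ : Type*}
    [Fintype Δ] [DecidableEq Δ] [Fintype Γ] [DecidableEq Γ]
    (K : Subgroup (Equiv.Perm Δ)) (L : Subgroup (Equiv.Perm Γ))
    (hKtrans : MulAction.IsPretransitive ↥K Δ)
    (hLtrans : MulAction.IsPretransitive ↥L Γ)
    (wΔ : Finset Δ) (hwΔ : IsRegularSet K wΔ) (hhalf : 2 * wΔ.card ≠ Fintype.card Δ)
    (wΓ : Finset Γ) (hwΓ : IsRegularSet L wΓ) :
    ∃ w : Finset (Δ × Γ), IsRegularSet (wreathProduct K L) w ∧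
      w.card = wΓ.card * wΔ.card +
        (Fintype.card Γ - wΓ.card) * (Fintype.card Δ - wΔ.card) :=
  wreathProduct_regular_set_general K L wΔ hwΔ hhalf wΓ hwΓ
end

section
/- Let K be a permutation group on a finite set Δ and L a transitive permutation group on a finite set Σ. If K has at least |Σ| regular sets on Δ of pairwise distinct cardinalities, then the imprimitive wreath product K ≀ L has a regular set on Δ × Σ. -/
open Pointwise MulAction

/-!
Put the regular set `w i` into the fibre over `i`. An element `(δ, i) ↦ (k i δ, σ i)` of `K ≀ L`
fixing the union of these sets maps `w i` onto `w (σ i)` by `k i`. The sets `w i` have distinct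
sizes, so `σ = 1`; then each `k i` stabilizes the regular set `w i`, so `k i = 1`.
-/

section UnionFibers

variable {Δ Γ : Type*} [DecidableEq Δ] [Fintype Γ] [DecidableEq Γ]

def unionFibers (w : Γ → Finset Δ) : Finset (Δ × Γ) :=
  Finset.univ.biUnion fun i => w i ×ˢ {i}

@[simp]
theorem mem_unionFibers {w : Γ → Finset Δ} {p : Δ × Γ} : p ∈ unionFibers w ↔ p.1 ∈ w p.2 := by
  obtain ⟨δ, i⟩ := p
  simp [unionFibers]

theorem unionFibers_injective : Function.Injective (unionFibers (Δ := Δ) (Γ := Γ)) := by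
  intro w w' h
  funext i
  ext δ
  simpa using congrArg (fun W => (δ, i) ∈ W) h

theorem smul_unionFibers {g : Equiv.Perm (Δ × Γ)} {σ : Equiv.Perm Γ} {k : Γ → Equiv.Perm Δ}
    (hg : ∀ p, g p = (k p.2 p.1, σ p.2)) (w : Γ → Finset Δ) :
    g • unionFibers w = unionFibers fun j => k (σ.symm j) • w (σ.symm j) := by
  ext p
  obtain ⟨q, rfl⟩ := g.surjective p
  rw [← Equiv.Perm.smul_def, Finset.smul_mem_smul_finset_iff, mem_unionFibers, mem_unionFibers,
    Equiv.Perm.smul_def, hg, σ.symm_apply_apply, ← Equiv.Perm.smul_def,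
    Finset.smul_mem_smul_finset_iff]

end UnionFibers

theorem wreathProduct_regular_set_of_many_regular_sets_general {Δ Γ : Type*}
    [DecidableEq Δ] [Fintype Γ] [DecidableEq Γ]
    (K : Subgroup (Equiv.Perm Δ)) (L : Subgroup (Equiv.Perm Γ))
    (hreg : ∃ w : Γ → Finset Δ, (∀ i, IsRegularSet K (w i)) ∧
      Function.Injective fun i => (w i).card) :
    ∃ w : Finset (Δ × Γ), IsRegularSet (wreathProduct K L) w := by
  obtain ⟨w, hwreg, hwcard⟩ := hreg
  refine ⟨unionFibers w, ?_⟩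
  rintro g ⟨σ, -, k, hk, hg⟩ hfix
  have hfiber (i : Γ) : k i • w i = w (σ i) := by
    simpa using congrFun (unionFibers_injective ((smul_unionFibers hg w).symm.trans hfix)) (σ i)
  have hσ (i : Γ) : σ i = i :=
    hwcard (by simpa [Finset.card_smul_finset] using (congrArg Finset.card (hfiber i)).symm)
  have hk1 (i : Γ) : k i = 1 := hwreg i _ (hk i) (by rw [hfiber, hσ])
  ext p : 1
  simp [hg, hσ, hk1]

/-- If `K` has at least `|Γ|` regular sets on `Δ` of pairwise distinct
cardinalities and `L` is transitive on `Γ`, then `K ≀ L` has a regular set on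
`Δ × Γ`. -/
theorem wreathProduct_regular_set_of_many_regular_sets {Δ Γ : Type*}
    [Fintype Δ] [DecidableEq Δ] [Fintype Γ] [DecidableEq Γ]
    (K : Subgroup (Equiv.Perm Δ)) (L : Subgroup (Equiv.Perm Γ))
    (hLtrans : MulAction.IsPretransitive ↥L Γ)
    (hreg : ∃ w : Γ → Finset Δ, (∀ i, IsRegularSet K (w i)) ∧
      Function.Injective fun i => (w i).card) :
    ∃ w : Finset (Δ × Γ), IsRegularSet (wreathProduct K L) w :=
  wreathProduct_regular_set_of_many_regular_sets_general K L hreg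
end

section
/- Let G and H be permutation groups on a finite set Ω, and let k and ℓ be integers with 0 ≤ k ≤ ℓ and k + ℓ ≤ |Ω|. If G and H have the same orbits on the ℓ-element subsets of Ω, then G and H have the same orbits on the k-element subsets of Ω. -/
open Pointwise MulAction

/-! This is the sl₂ argument for the Livingstone–Wagner lemma. Let `U = sumErase` send `f` to
`y ↦ ∑_{b ∈ y} f (y \ {b})` and `D = sumInsert` send `f` to `y ↦ ∑_{a ∉ y} f (y ∪ {a})`. They
are adjoint for the standard inner product and `DU - UD` is multiplication by `|Ω| - 2|x|`, so
`‖Uf‖² = ‖Df‖² + ∑ₓ (|Ω| - 2|x|) f(x)²`. Hence `U` is injective on functions living on `j`-sets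
with `2j < |Ω|`, and `U^(ℓ-k)` is injective on functions living on `k`-sets when
`2ℓ ≤ |Ω| + 1`. Apply `U^(ℓ-k)` to the indicator of a `G`-orbit of `k`-sets: the image lives on
`ℓ`-sets and is `G`-invariant, hence `H`-invariant; since `U` commutes with permutations,
injectivity makes the indicator itself `H`-invariant. Passing to complements handles
`2ℓ > |Ω|`. -/

namespace LivingstoneWagner

open Finset

variable {Ω : Type*}

def IsHomogeneous {R : Type*} [Zero R] (j : ℕ) (f : Finset Ω → R) : Prop :=
  ∀ x, f x ≠ 0 → #x = j

lemma IsHomogeneous.sub {R : Type*} [AddGroup R] {j : ℕ} {f g : Finset Ω → R}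
    (hf : IsHomogeneous j f) (hg : IsHomogeneous j g) : IsHomogeneous j (f - g) := by
  intro x hx
  by_contra hj
  exact hx (by simp [not_imp_comm.mp (hf x) hj, not_imp_comm.mp (hg x) hj])

section Operators

variable [DecidableEq Ω] {R : Type*} [CommRing R]

def compSMul {M : Type*} [Group M] [MulAction M Ω] (g : M) : Module.End R (Finset Ω → R) :=
  LinearMap.funLeft R R (g • ·)

lemma compSMul_apply {M : Type*} [Group M] [MulAction M Ω] (g : M) (f : Finset Ω → R)
    (x : Finset Ω) : compSMul g f x = f (g • x) := rfl

lemma IsHomogeneous.compSMul {M : Type*} [Group M] [MulAction M Ω] {j : ℕ}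
    {f : Finset Ω → R} (hf : IsHomogeneous j f) (g : M) :
    IsHomogeneous j (LivingstoneWagner.compSMul g f) := by
  intro x hx
  simpa using hf _ hx

def sumErase : Module.End R (Finset Ω → R) where
  toFun f x := ∑ b ∈ x, f (x.erase b)
  map_add' f g := by ext x; simp [sum_add_distrib]
  map_smul' c f := by ext x; simp [mul_sum]

lemma sumErase_apply (f : Finset Ω → R) (x : Finset Ω) :
    sumErase f x = ∑ b ∈ x, f (x.erase b) := rfl

lemma IsHomogeneous.sumErase {j : ℕ} {f : Finset Ω → R} (hf : IsHomogeneous j f) :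
    IsHomogeneous (j + 1) (sumErase f) := by
  intro x hx
  obtain ⟨b, hb, hfb⟩ := exists_ne_zero_of_sum_ne_zero hx
  have := hf _ hfb
  rw [card_erase_of_mem hb] at this
  have := card_pos.mpr ⟨b, hb⟩
  omega

lemma IsHomogeneous.sumErase_pow {j : ℕ} {f : Finset Ω → R} (hf : IsHomogeneous j f) (m : ℕ) :
    IsHomogeneous (j + m) ((LivingstoneWagner.sumErase ^ m) f) := by
  induction m with
  | zero => simpa using hf
  | succ m ih => rw [pow_succ', Module.End.mul_apply, ← add_assoc]; exact ih.sumErase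

lemma commute_sumErase_compSMul {M : Type*} [Group M] [MulAction M Ω] (g : M) :
    Commute (sumErase : Module.End R (Finset Ω → R)) (compSMul g) := by
  ext f x
  simp only [Module.End.mul_apply, compSMul_apply, sumErase_apply, smul_finset_def]
  rw [sum_image (MulAction.injective g).injOn]
  refine sum_congr rfl fun b _ => ?_
  rw [← image_erase (MulAction.injective g)]

lemma sumErase_pow_compSMul {M : Type*} [Group M] [MulAction M Ω] (m : ℕ) (g : M)
    (f : Finset Ω → R) : (sumErase ^ m) (compSMul g f) = compSMul g ((sumErase ^ m) f) := by
  rw [← Module.End.mul_apply, ((commute_sumErase_compSMul g).pow_left m).eq,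
    Module.End.mul_apply]

variable [Fintype Ω]

def sumInsert : Module.End R (Finset Ω → R) where
  toFun f x := ∑ a ∈ xᶜ, f (insert a x)
  map_add' f g := by ext x; simp [sum_add_distrib]
  map_smul' c f := by ext x; simp [mul_sum]

lemma sumInsert_apply (f : Finset Ω → R) (x : Finset Ω) :
    sumInsert f x = ∑ a ∈ xᶜ, f (insert a x) := rfl

lemma sumErase_dotProduct (f g : Finset Ω → R) : sumErase f ⬝ᵥ g = f ⬝ᵥ sumInsert g := by
  simp only [dotProduct, sumErase_apply, sumInsert_apply, sum_mul, mul_sum]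
  rw [sum_sigma', sum_sigma']
  refine sum_nbij' (fun p => ⟨p.1.erase p.2, p.2⟩) (fun p => ⟨insert p.2 p.1, p.2⟩)
    ?_ ?_ ?_ ?_ ?_ <;> rintro ⟨x, b⟩ hb <;>
      simp only [mem_sigma, mem_univ, true_and, mem_compl] at hb
  · simp
  · simp
  · simp [insert_erase hb]
  · simp [erase_insert hb]
  · simp [insert_erase hb]

lemma sumInsert_sumErase_sub_sumErase_sumInsert (f : Finset Ω → R) (x : Finset Ω) :
    sumInsert (sumErase f) x - sumErase (sumInsert f) x = (Fintype.card Ω - 2 * #x) * f x := by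
  have hinsert : ∀ a ∈ xᶜ,
      sumErase f (insert a x) = f x + ∑ b ∈ x, f (insert a (x.erase b)) := by
    intro a ha
    rw [mem_compl] at ha
    rw [sumErase_apply, sum_insert ha, erase_insert ha]
    congr 1
    refine sum_congr rfl fun b hb => ?_
    rw [erase_insert_of_ne (by rintro rfl; exact ha hb)]
  have herase : ∀ b ∈ x,
      sumInsert f (x.erase b) = f x + ∑ a ∈ xᶜ, f (insert a (x.erase b)) := by
    intro b hb
    rw [sumInsert_apply, compl_erase, sum_insert (by simp [hb]), insert_erase hb]
  have hcard : (#xᶜ : R) = Fintype.card Ω - #x := by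
    rw [card_compl, Nat.cast_sub (card_le_univ x)]
  rw [sumInsert_apply, sumErase_apply, sum_congr rfl hinsert, sum_congr rfl herase,
    sum_add_distrib, sum_add_distrib, sum_const, sum_const, sum_comm, nsmul_eq_mul,
    nsmul_eq_mul, hcard]
  ring

lemma sumErase_dotProduct_sumErase (f : Finset Ω → R) :
    sumErase f ⬝ᵥ sumErase f =
      sumInsert f ⬝ᵥ sumInsert f + ∑ x, (Fintype.card Ω - 2 * #x : R) * (f x * f x) := by
  have hcomm : sumInsert (sumErase f) =
      sumErase (sumInsert f) + fun x => (Fintype.card Ω - 2 * #x : R) * f x := by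
    ext x
    rw [Pi.add_apply, ← sumInsert_sumErase_sub_sumErase_sumInsert]
    ring
  rw [sumErase_dotProduct, hcomm, dotProduct_add, dotProduct_comm, sumErase_dotProduct]
  simp only [dotProduct]
  congr 1
  exact sum_congr rfl fun x _ => by ring

end Operators

section Injectivity

variable [DecidableEq Ω] [Fintype Ω] {R : Type*} [CommRing R] [LinearOrder R]
  [IsStrictOrderedRing R]

lemma eq_zero_of_sumErase_eq_zero {j : ℕ} {f : Finset Ω → R}
    (hf : IsHomogeneous j f) (hj : 2 * j < Fintype.card Ω) (h : sumErase f = 0) : f = 0 := by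
  have hpos : (0 : R) < Fintype.card Ω - 2 * j := by
    rw [sub_pos]; exact_mod_cast hj
  have hterm : ∀ x, (Fintype.card Ω - 2 * #x : R) * (f x * f x) =
      (Fintype.card Ω - 2 * j) * (f x * f x) := by
    intro x
    by_cases hx : f x = 0
    · simp [hx]
    · rw [hf x hx]
  have hsum : (Fintype.card Ω - 2 * j : R) * (f ⬝ᵥ f) = -(sumInsert f ⬝ᵥ sumInsert f) := by
    have := sumErase_dotProduct_sumErase f
    rw [h, zero_dotProduct, sum_congr rfl fun x _ => hterm x, ← mul_sum] at this
    change 0 = _ + _ * (f ⬝ᵥ f) at this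
    linear_combination -this
  have hnonneg : ∀ v : Finset Ω → R, 0 ≤ v ⬝ᵥ v :=
    fun v => Fintype.sum_nonneg fun _ => mul_self_nonneg _
  have hle : f ⬝ᵥ f ≤ 0 :=
    nonpos_of_mul_nonpos_right (hsum ▸ neg_nonpos.mpr (hnonneg _)) hpos
  exact dotProduct_self_eq_zero.mp (le_antisymm hle (hnonneg f))

lemma eq_zero_of_sumErase_pow_eq_zero {j m : ℕ} {f : Finset Ω → R}
    (hf : IsHomogeneous j f) (hjm : 2 * (j + m) ≤ Fintype.card Ω + 1)
    (h : (sumErase ^ m) f = 0) : f = 0 := by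
  induction m generalizing j f with
  | zero => simpa using h
  | succ m ih =>
    rw [pow_succ, Module.End.mul_apply] at h
    exact eq_zero_of_sumErase_eq_zero hf (by omega) (ih hf.sumErase (by omega) h)

end Injectivity

variable [DecidableEq Ω]

def SameSetOrbits (G H : Subgroup (Equiv.Perm Ω)) (ℓ : ℕ) : Prop :=
  ∀ x : Finset Ω, #x = ℓ → orbit G x = orbit H x

variable {G H : Subgroup (Equiv.Perm Ω)} {ℓ : ℕ}

lemma SameSetOrbits.symm (h : SameSetOrbits G H ℓ) : SameSetOrbits H G ℓ :=
  fun x hx => (h x hx).symm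

lemma SameSetOrbits.compSMul_eq {R : Type*} [CommRing R] (h : SameSetOrbits G H ℓ)
    {F : Finset Ω → R} (hF : IsHomogeneous ℓ F) (hG : ∀ g ∈ G, compSMul g F = F)
    {σ : Equiv.Perm Ω} (hσ : σ ∈ H) : compSMul σ F = F := by
  ext z
  rw [compSMul_apply]
  by_cases hz : #z = ℓ
  · obtain ⟨⟨g, hg⟩, hgz⟩ : σ • z ∈ orbit G z := h z hz ▸ ⟨⟨σ, hσ⟩, rfl⟩
    rw [← hgz]
    exact congrFun (hG g hg) z
  · rw [not_imp_comm.mp (hF z) hz, not_imp_comm.mp (hF _) (by simpa using hz)]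

lemma SameSetOrbits.orbit_subset [Fintype Ω] {k : ℕ} (h : SameSetOrbits G H ℓ) (hkℓ : k ≤ ℓ)
    (hℓ : 2 * ℓ ≤ Fintype.card Ω + 1) {x : Finset Ω} (hx : #x = k) :
    orbit H x ⊆ orbit G x := by
  set f : Finset Ω → ℚ := (orbit G x).indicator 1 with hf_def
  have hf : IsHomogeneous k f := by
    intro y hy
    obtain ⟨g, rfl⟩ := Set.mem_of_indicator_ne_zero hy
    simpa [Subgroup.smul_def] using hx
  have hfG : ∀ g ∈ G, compSMul g f = f := by
    intro g hg
    ext y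
    have hmem : g • y ∈ orbit G x ↔ y ∈ orbit G x := by
      rw [← orbit_eq_iff, ← orbit_eq_iff, ← orbit_smul ⟨g, hg⟩ y]; rfl
    by_cases hy : y ∈ orbit G x
    · simp [hf_def, compSMul_apply, hy, hmem.mpr hy]
    · simp [hf_def, compSMul_apply, hy, mt hmem.mp hy]
  have hF : IsHomogeneous ℓ ((sumErase ^ (ℓ - k)) f) := by
    simpa [Nat.add_sub_cancel' hkℓ] using hf.sumErase_pow (ℓ - k)
  have hFG : ∀ g ∈ G, compSMul g ((sumErase ^ (ℓ - k)) f) = (sumErase ^ (ℓ - k)) f :=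
    fun g hg => by rw [← sumErase_pow_compSMul, hfG g hg]
  have hfH : ∀ σ ∈ H, compSMul σ f = f := by
    intro σ hσ
    refine sub_eq_zero.mp (eq_zero_of_sumErase_pow_eq_zero ((hf.compSMul σ).sub hf)
      (m := ℓ - k) (by omega) ?_)
    rw [map_sub, sumErase_pow_compSMul, h.compSMul_eq hF hFG hσ, sub_self]
  rintro _ ⟨⟨σ, hσ⟩, rfl⟩
  simpa [hf_def, compSMul_apply, Set.indicator, mem_orbit_self] using congrFun (hfH σ hσ) x

lemma SameSetOrbits.of_le [Fintype Ω] {k : ℕ} (h : SameSetOrbits G H ℓ) (hkℓ : k ≤ ℓ)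
    (hℓ : 2 * ℓ ≤ Fintype.card Ω + 1) : SameSetOrbits G H k := fun _ hx =>
  (h.symm.orbit_subset hkℓ hℓ hx).antisymm (h.orbit_subset hkℓ hℓ hx)

lemma smul_finset_compl [Fintype Ω] {M : Type*} [Group M] [MulAction M Ω] (g : M)
    (x : Finset Ω) : g • xᶜ = (g • x)ᶜ := by
  rw [compl_eq_univ_sdiff, compl_eq_univ_sdiff, smul_finset_sdiff, smul_finset_univ]

lemma compl_mem_orbit_compl_iff [Fintype Ω] {x y : Finset Ω} :
    yᶜ ∈ orbit G xᶜ ↔ y ∈ orbit G x := by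
  simp only [mem_orbit_iff, Subgroup.smul_def, smul_finset_compl, compl_inj_iff]

lemma SameSetOrbits.card_sub [Fintype Ω] (h : SameSetOrbits G H ℓ) (hℓ : ℓ ≤ Fintype.card Ω) :
    SameSetOrbits G H (Fintype.card Ω - ℓ) := by
  intro x hx
  ext y
  rw [← compl_mem_orbit_compl_iff, ← compl_mem_orbit_compl_iff (G := H),
    h xᶜ (by rw [card_compl]; omega)]

end LivingstoneWagner

/-- If `G` and `H` have the same orbits on `ℓ`-element subsets and
`k ≤ ℓ`, `k + ℓ ≤ |Ω|`, then they have the same orbits on `k`-element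
subsets. -/
theorem same_orbits_of_smaller {Ω : Type*} [Fintype Ω] [DecidableEq Ω]
    (G H : Subgroup (Equiv.Perm Ω)) (k ℓ : ℕ) (hkl : k ≤ ℓ)
    (hln : k + ℓ ≤ Fintype.card Ω)
    (horb : ∀ x : Finset Ω, x.card = ℓ →
      MulAction.orbit ↥G x = MulAction.orbit ↥H x) :
    ∀ x : Finset Ω, x.card = k →
      MulAction.orbit ↥G x = MulAction.orbit ↥H x := by
  intro x hx
  have hsame : LivingstoneWagner.SameSetOrbits G H ℓ := horb
  rcases le_total (2 * ℓ) (Fintype.card Ω) with hℓ | hℓ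
  · exact hsame.of_le hkl (by omega) x hx
  · exact (hsame.card_sub (by omega)).of_le (by omega) (by omega) x hx
end
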